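/- arXiv:1309.3720 — 2 statements merged into one kernel-verified Lean document; each statement's English description precedes it below -/
import Mathlib

section
/- Cross-correlation of chirps on distinct finite-slope lines: for a ≠ a' in ℤ_N and any b,b' ∈ ℤ_N, |A(C_{L_{a,b}}, C_{L_{a',b'}})[v]| = 1/√N for every v ∈ ℤ_N × ℤ_N. -/
open Finset

/-- `e(t) = exp(2πit/N)` on `ℤ/N`. -/
noncomputable def eN (N : ℕ) [NeZero N] (t : ZMod N) : ℂ :=
  Complex.exp (2 * Real.pi * Complex.I * (t.val : ℂ) / N)

/-- Heisenberg operator `π(τ,ω)`. -/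
noncomputable def heis (N : ℕ) [NeZero N] (τ ω : ZMod N) (f : ZMod N → ℂ) : ZMod N → ℂ :=
  fun n => eN N (-(2⁻¹ * τ * ω)) * eN N (ω * n) * f (n - τ)

/-- Standard inner product on sequences. -/
noncomputable def inn (N : ℕ) [NeZero N] (f g : ZMod N → ℂ) : ℂ :=
  ∑ n : ZMod N, f n * (starRingEnd ℂ) (g n)

/-- Ambiguity function `A(f,g)[v] = ⟨π(v)f, g⟩`. -/
noncomputable def amb (N : ℕ) [NeZero N] (f g : ZMod N → ℂ) (v : ZMod N × ZMod N) : ℂ :=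
  inn N (heis N v.1 v.2 f) g

/-- Chirp sequence `C_{L_{a,b}}[n] = e(2⁻¹ a n² − b n)/√N`. -/
noncomputable def chirp (N : ℕ) [NeZero N] (a b : ZMod N) : ZMod N → ℂ :=
  fun n => eN N (2⁻¹ * a * n ^ 2 - b * n) / (Real.sqrt N : ℂ)

/-- Dirac delta sequence supported at `b`. -/
def deltaSeq (N : ℕ) (b : ZMod N) : ZMod N → ℂ :=
  fun n => if n = b then 1 else 0

/-- Channel operator `H(S)[n] = Σ_k α_k e(ω_k n) S[n−τ_k]`. -/
noncomputable def chanOp (N : ℕ) [NeZero N] (r : ℕ) (α : Fin r → ℂ)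
    (tw : Fin r → ZMod N × ZMod N) (S : ZMod N → ℂ) : ZMod N → ℂ :=
  fun n => ∑ k : Fin r, α k * eN N ((tw k).2 * n) * S (n - (tw k).1)

/-! The ambiguity function of two chirps is a unimodular phase times `1/N` times the quadratic
exponential sum `∑ₙ e(c n² + d n)` with `c = (a - a')/2 ≠ 0`. Multiplying such a sum by its
conjugate and substituting `x = y + h` leaves a linear character sum in `y`, which vanishes unless
`2ch = 0`, i.e. `h = 0`; hence the sum has modulus `√N`. -/

theorem AddChar.norm_sum_quadratic {R 𝕜 : Type*} [CommRing R] [Fintype R] [RCLike 𝕜]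
    {ψ : AddChar R 𝕜} (hψ : ψ.IsPrimitive) {c : R} (hc : IsUnit (2 * c)) (d : R) :
    ‖∑ x, ψ (c * x ^ 2 + d * x)‖ = √(Fintype.card R) := by
  classical
  set q : R → R := fun x => c * x ^ 2 + d * x
  have hq (y h : R) : q (y + h) - q y = q h + y * (2 * c * h) := by ring
  have hsq : (∑ x, ψ (q x)) * (starRingEnd 𝕜) (∑ x, ψ (q x)) = Fintype.card R := by
    calc (∑ x, ψ (q x)) * (starRingEnd 𝕜) (∑ x, ψ (q x))
        = ∑ y, ∑ h, ψ (q (y + h) - q y) := by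
          simp_rw [map_sum, Finset.sum_mul_sum, ← AddChar.map_neg_eq_conj,
            ← AddChar.map_add_eq_mul]
          rw [Finset.sum_comm]
          refine Finset.sum_congr rfl fun y _ => ?_
          rw [← Equiv.sum_comp (Equiv.addLeft y)]
          simp [sub_eq_add_neg]
      _ = ∑ h, ψ (q h) * ∑ y, ψ (y * (2 * c * h)) := by
          simp_rw [hq, AddChar.map_add_eq_mul, Finset.mul_sum]
          exact Finset.sum_comm
      _ = Fintype.card R := by
          simp_rw [AddChar.sum_mulShift _ hψ, hc.mul_right_eq_zero]
          simp [q]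
  rw [RCLike.mul_conj] at hsq
  rw [← Real.sqrt_sq (norm_nonneg _)]
  exact congrArg Real.sqrt (mod_cast hsq)

lemma eN_eq_stdAddChar (N : ℕ) [NeZero N] (t : ZMod N) : eN N t = ZMod.stdAddChar t := by
  rw [ZMod.stdAddChar_apply, ZMod.toCircle_apply, eN]

-- `2 * 2⁻¹` is left as is: for even `N` it is not `1`, and the identity holds for every `N`.
lemma amb_chirp_chirp (N : ℕ) [NeZero N] (a a' b b' τ ω : ZMod N) :
    amb N (chirp N a b) (chirp N a' b') (τ, ω) =
      ZMod.stdAddChar (2⁻¹ * a * τ ^ 2 + b * τ - 2⁻¹ * τ * ω) / N *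
        ∑ n, ZMod.stdAddChar
          (2⁻¹ * (a - a') * n ^ 2 + (ω - 2 * 2⁻¹ * (a * τ) - b + b') * n) := by
  have hsqrt : (√N : ℂ) * √N = N := by
    rw [← Complex.ofReal_mul, Real.mul_self_sqrt (Nat.cast_nonneg N), Complex.ofReal_natCast]
  simp only [amb, inn, heis, chirp, eN_eq_stdAddChar, map_div₀, Complex.conj_ofReal,
    ← AddChar.map_neg_eq_conj, Finset.mul_sum]
  refine Finset.sum_congr rfl fun n _ => ?_
  rw [← hsqrt]
  field_simp
  simp only [← AddChar.map_add_eq_mul]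
  congr 1
  exact congrArg ZMod.stdAddChar (by ring)

theorem chirp_cross_correlation (N : ℕ) [NeZero N] (hN : N.Prime) (hodd : Odd N)
    (a a' b b' : ZMod N) (haa : a ≠ a') (v : ZMod N × ZMod N) :
    ‖amb N (chirp N a b) (chirp N a' b') v‖ = 1 / Real.sqrt N := by
  have : Fact N.Prime := ⟨hN⟩
  have h2 : (2 : ZMod N) ≠ 0 := Ring.two_ne_zero <| by
    rw [ZMod.ringChar_zmod_n]
    rintro rfl
    exact Nat.not_even_iff_odd.2 hodd even_two
  have hc : IsUnit (2 * (2⁻¹ * (a - a'))) := by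
    rw [← mul_assoc, mul_inv_cancel₀ h2, one_mul]
    exact (sub_ne_zero.2 haa).isUnit
  obtain ⟨τ, ω⟩ := v
  rw [amb_chirp_chirp, norm_mul, norm_div, AddChar.norm_apply, Complex.norm_natCast,
    AddChar.norm_sum_quadratic (ZMod.isPrimitive_stdAddChar N) hc, ZMod.card]
  have hN0 : (0 : ℝ) < N := mod_cast hN.pos
  field_simp
  rw [Real.sq_sqrt hN0.le]
end

section
/- Peak structure: Suppose the channel operator H is L-generic, and C_L is a norm-one common eigenfunction of {π(l) : l ∈ L}. Then |A(C_L, H(C_L))[v]| = |α_k| if v ∈ L + (τ_k,ω_k) for some k ∈ {1,…,r}, and |A(C_L, H(C_L))[v]| = 0 if v does not lie on any of the shifted lines L + (τ_k,ω_k). -/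
open Finset

/-!
Write the channel as `H = Σ_k α_k e(2⁻¹τ_kω_k) π(τ_k,ω_k)`. Since `π(w) π(u)` is a unimodular
multiple of `π(w + u)` and `π(w)` is unitary, `A(C, H C)[v]` is a sum over `k` of unimodular
multiples of `conj α_k · A(C, C)[v − (τ_k,ω_k)]`. On `L` the auto-ambiguity `A(C, C)` is the
eigenvalue of `C`, of modulus one. Off `L` it vanishes: for `u ∉ L` there is `l ∈ L` with
symplectic form `σ(u, l) ≠ 0`, and `π(l) π(u) = e(σ(u, l)) π(u) π(l)`, together with `C` being
an eigenvector of the unitary `π(l)`, gives `A(C, C)[u] = e(σ(u, l)) A(C, C)[u]` with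
`e(σ(u, l)) ≠ 1`. `L`-genericity leaves at most one `k` with `v − (τ_k,ω_k) ∈ L`.
-/

open ComplexConjugate

section Character

variable {N : ℕ} [NeZero N]

lemma eN_eq_toCircle (t : ZMod N) : eN N t = ZMod.toCircle t := by
  rw [ZMod.toCircle_apply, eN]

lemma eN_add (s t : ZMod N) : eN N (s + t) = eN N s * eN N t := by
  simp only [eN_eq_toCircle, AddChar.map_add_eq_mul, Circle.coe_mul]

lemma eN_neg (t : ZMod N) : eN N (-t) = conj (eN N t) := by
  simp only [eN_eq_toCircle, AddChar.map_neg_eq_inv, Circle.coe_inv_eq_conj]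

lemma eN_zero : eN N 0 = 1 := by
  simp [eN]

lemma norm_eN (t : ZMod N) : ‖eN N t‖ = 1 := by
  rw [eN_eq_toCircle]; exact Circle.norm_coe _

lemma eN_mul_conj (t : ZMod N) : eN N t * conj (eN N t) = 1 := by
  rw [Complex.mul_conj', norm_eN]; norm_num

lemma eN_eq_one_iff (t : ZMod N) : eN N t = 1 ↔ t = 0 := by
  rw [eN_eq_toCircle, Circle.coe_eq_one, ← ZMod.injective_toCircle.eq_iff,
    AddChar.map_zero_eq_one]

end Character

section Heisenberg

variable {N : ℕ} [NeZero N]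

lemma heis_smul (a b : ZMod N) (c : ℂ) (f : ZMod N → ℂ) :
    heis N a b (c • f) = c • heis N a b f := by
  funext n; simp only [heis, Pi.smul_apply, smul_eq_mul]; ring

-- The phase is written so that this holds whatever `2⁻¹` is in `ZMod N`.
lemma heis_heis (a b c d : ZMod N) (f : ZMod N → ℂ) :
    heis N a b (heis N c d f)
      = eN N (2⁻¹ * (a * d + c * b) - a * d) • heis N (a + c) (b + d) f := by
  funext n
  simp only [heis, Pi.smul_apply, smul_eq_mul, sub_sub]
  have key : -(2⁻¹ * a * b) + b * n + (-(2⁻¹ * c * d) + d * (n - a))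
      = 2⁻¹ * (a * d + c * b) - a * d + (-(2⁻¹ * (a + c) * (b + d)) + (b + d) * n) := by ring
  have := congrArg (eN N) key
  simp only [eN_add] at this
  linear_combination f (n - (a + c)) * this

lemma heis_comm (a b c d : ZMod N) (f : ZMod N → ℂ) :
    heis N a b (heis N c d f) = eN N (c * b - a * d) • heis N c d (heis N a b f) := by
  funext n
  simp only [heis, Pi.smul_apply, smul_eq_mul, sub_sub, add_comm a c]
  have key : -(2⁻¹ * a * b) + b * n + (-(2⁻¹ * c * d) + d * (n - a))
      = c * b - a * d + (-(2⁻¹ * c * d) + d * n + (-(2⁻¹ * a * b) + b * (n - c))) := by ring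
  have := congrArg (eN N) key
  simp only [eN_add] at this
  linear_combination f (n - (c + a)) * this

lemma inn_smul_left (c : ℂ) (f g : ZMod N → ℂ) : inn N (c • f) g = c * inn N f g := by
  simp only [inn, Finset.mul_sum, Pi.smul_apply, smul_eq_mul, mul_assoc]

lemma inn_smul_right (c : ℂ) (f g : ZMod N → ℂ) : inn N f (c • g) = conj c * inn N f g := by
  simp only [inn, Finset.mul_sum, Pi.smul_apply, smul_eq_mul, map_mul, mul_left_comm]

lemma inn_sum_right {ι : Type*} (s : Finset ι) (f : ZMod N → ℂ) (g : ι → ZMod N → ℂ) :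
    inn N f (∑ k ∈ s, g k) = ∑ k ∈ s, inn N f (g k) := by
  simp only [inn, Finset.sum_apply, map_sum, Finset.mul_sum]
  exact Finset.sum_comm

lemma inn_heis_heis (a b : ZMod N) (f g : ZMod N → ℂ) :
    inn N (heis N a b f) (heis N a b g) = inn N f g := by
  have phase (n : ZMod N) :
      heis N a b f n * conj (heis N a b g n) = f (n - a) * conj (g (n - a)) := by
    simp only [heis, map_mul]
    linear_combination f (n - a) * conj (g (n - a)) *
      (eN N (b * n) * conj (eN N (b * n)) * eN_mul_conj (-(2⁻¹ * a * b)) + eN_mul_conj (b * n))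
  simp only [inn, phase]
  exact Fintype.sum_equiv (Equiv.subRight a) _ _ fun n => rfl

end Heisenberg

lemma mem_span_singleton_of_mul_sub_mul_eq_zero {K : Type*} [Field K] {l u : K × K}
    (hl : l ≠ 0) (h : u.1 * l.2 - l.1 * u.2 = 0) : u ∈ K ∙ l := by
  rw [Submodule.mem_span_singleton]
  by_cases h1 : l.1 = 0
  · have h2 : l.2 ≠ 0 := fun h2 => hl (Prod.ext h1 h2)
    refine ⟨u.2 / l.2, Prod.ext ?_ ?_⟩
    · have : u.1 = 0 := by simpa [h1, h2] using h
      simp [h1, this]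
    · simp [h2]
  · refine ⟨u.1 / l.1, Prod.ext ?_ ?_⟩
    · simp [h1]
    · simp only [Prod.smul_snd, smul_eq_mul]
      field_simp
      linear_combination h

lemma exists_mem_mul_sub_mul_ne_zero {K : Type*} [Field K] {L : Submodule K (K × K)}
    (hL : L ≠ ⊥) {u : K × K} (hu : u ∉ L) : ∃ l ∈ L, u.1 * l.2 - l.1 * u.2 ≠ 0 := by
  obtain ⟨l, hl, hl0⟩ := Submodule.exists_mem_ne_zero_of_ne_bot hL
  refine ⟨l, hl, fun h => hu ?_⟩
  exact (Submodule.span_singleton_le_iff_mem l L).mpr hl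
    (mem_span_singleton_of_mul_sub_mul_eq_zero hl0 h)

section Ambiguity

variable {N : ℕ} [NeZero N]

lemma amb_self_eq_zero_of_heis_eq_smul {f : ZMod N → ℂ} {l u : ZMod N × ZMod N} {ψ : ℂ}
    (hψ : ‖ψ‖ = 1) (hf : heis N l.1 l.2 f = ψ • f) (hlu : u.1 * l.2 - l.1 * u.2 ≠ 0) :
    amb N f f u = 0 := by
  have hψψ : ψ * conj ψ = 1 := by rw [Complex.mul_conj', hψ]; norm_num
  have fixed : amb N f f u = eN N (u.1 * l.2 - l.1 * u.2) * amb N f f u :=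
    calc amb N f f u = inn N (heis N l.1 l.2 (heis N u.1 u.2 f)) (heis N l.1 l.2 f) :=
          (inn_heis_heis _ _ _ _).symm
      _ = eN N (u.1 * l.2 - l.1 * u.2) * (ψ * conj ψ) * amb N f f u := by
          rw [heis_comm, hf, heis_smul, smul_smul, inn_smul_left, inn_smul_right, amb]; ring
      _ = eN N (u.1 * l.2 - l.1 * u.2) * amb N f f u := by rw [hψψ, mul_one]
  have hne : eN N (u.1 * l.2 - l.1 * u.2) ≠ 1 := (eN_eq_one_iff _).not.mpr hlu
  have : (eN N (u.1 * l.2 - l.1 * u.2) - 1) * amb N f f u = 0 := by linear_combination -fixed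
  exact (mul_eq_zero.mp this).resolve_left (sub_ne_zero.mpr hne)

lemma amb_self_eq_zero_of_not_mem [Fact N.Prime] {L : Submodule (ZMod N) (ZMod N × ZMod N)}
    (hL : L ≠ ⊥) {f : ZMod N → ℂ} {ψ : L → ℂ} (hψ : ∀ l, ‖ψ l‖ = 1)
    (hf : ∀ l : L, heis N (l : ZMod N × ZMod N).1 (l : ZMod N × ZMod N).2 f = ψ l • f)
    {u : ZMod N × ZMod N} (hu : u ∉ L) : amb N f f u = 0 := by
  obtain ⟨l, hl, hlu⟩ := exists_mem_mul_sub_mul_ne_zero hL hu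
  exact amb_self_eq_zero_of_heis_eq_smul (hψ ⟨l, hl⟩) (hf ⟨l, hl⟩) hlu

lemma inn_heis_heis_eq_eN_mul_amb (f : ZMod N → ℂ) (v w : ZMod N × ZMod N) :
    inn N (heis N v.1 v.2 f) (heis N w.1 w.2 f)
      = eN N (-(2⁻¹ * (w.1 * (v - w).2 + (v - w).1 * w.2) - w.1 * (v - w).2))
        * amb N f f (v - w) := by
  have hcomp := heis_heis w.1 w.2 (v - w).1 (v - w).2 f
  rw [show w.1 + (v - w).1 = v.1 by simp, show w.2 + (v - w).2 = v.2 by simp] at hcomp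
  rw [amb, ← inn_heis_heis w.1 w.2 (heis N (v - w).1 (v - w).2 f) f, hcomp, inn_smul_left,
    ← mul_assoc, ← eN_add, neg_add_cancel, eN_zero, one_mul]

lemma chanOp_eq_sum_smul_heis (r : ℕ) (α : Fin r → ℂ) (tw : Fin r → ZMod N × ZMod N)
    (S : ZMod N → ℂ) :
    chanOp N r α tw S
      = ∑ k, (α k * eN N (2⁻¹ * (tw k).1 * (tw k).2)) • heis N (tw k).1 (tw k).2 S := by
  funext n
  simp only [chanOp, heis, Finset.sum_apply, Pi.smul_apply, smul_eq_mul]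
  refine Finset.sum_congr rfl fun k _ => ?_
  linear_combination -(α k * eN N ((tw k).2 * n) * S (n - (tw k).1)) *
    (eN_add (2⁻¹ * (tw k).1 * (tw k).2) (-(2⁻¹ * (tw k).1 * (tw k).2))).symm.trans
      (by rw [add_neg_cancel, eN_zero])

lemma exists_amb_chanOp_eq_sum (r : ℕ) (α : Fin r → ℂ) (tw : Fin r → ZMod N × ZMod N)
    (f : ZMod N → ℂ) (v : ZMod N × ZMod N) :
    ∃ t : Fin r → ZMod N,
      amb N f (chanOp N r α tw f) v = ∑ k, conj (α k) * eN N (t k) * amb N f f (v - tw k) := by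
  refine ⟨fun k => -(2⁻¹ * (tw k).1 * (tw k).2)
    + -(2⁻¹ * ((tw k).1 * (v - tw k).2 + (v - tw k).1 * (tw k).2) - (tw k).1 * (v - tw k).2), ?_⟩
  rw [amb, chanOp_eq_sum_smul_heis, inn_sum_right]
  refine Finset.sum_congr rfl fun k _ => ?_
  rw [inn_smul_right, inn_heis_heis_eq_eN_mul_amb, eN_add, eN_neg (2⁻¹ * _ * _), map_mul]
  ring

end Ambiguity

theorem peak_structure_general (N : ℕ) [NeZero N] (hN : N.Prime)
    (r : ℕ) (α : Fin r → ℂ) (tw : Fin r → ZMod N × ZMod N)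
    (L : Submodule (ZMod N) (ZMod N × ZMod N))
    (hL1 : Module.finrank (ZMod N) L = 1)
    (hgen : ∀ j k, j ≠ k → tw j - tw k ∉ L)
    (CL : ZMod N → ℂ) (hnorm : inn N CL CL = 1)
    (ψL : L → ℂ) (hunit : ∀ l : L, ‖ψL l‖ = 1)
    (hCL : ∀ l : L, heis N (l : ZMod N × ZMod N).1 (l : ZMod N × ZMod N).2 CL
        = fun n => ψL l * CL n) :
    (∀ (k : Fin r) (v : ZMod N × ZMod N), v - tw k ∈ L →
        ‖amb N CL (chanOp N r α tw CL) v‖ = ‖α k‖) ∧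
    (∀ v : ZMod N × ZMod N, (∀ k : Fin r, v - tw k ∉ L) →
        amb N CL (chanOp N r α tw CL) v = 0) := by
  have : Fact N.Prime := ⟨hN⟩
  have hL : L ≠ ⊥ := by
    rintro rfl
    simp at hL1
  have off_L {u} (hu : u ∉ L) : amb N CL CL u = 0 :=
    amb_self_eq_zero_of_not_mem hL hunit hCL hu
  refine ⟨fun k v hvk => ?_, fun v hv => ?_⟩
  · obtain ⟨t, ht⟩ := exists_amb_chanOp_eq_sum r α tw CL v
    have on_L : amb N CL CL (v - tw k) = ψL ⟨_, hvk⟩ := by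
      rw [amb, hCL ⟨_, hvk⟩]
      exact (inn_smul_left _ _ _).trans (by rw [hnorm, mul_one])
    rw [ht, Finset.sum_eq_single k, norm_mul, norm_mul, on_L, hunit, norm_eN, RCLike.norm_conj]
    · ring
    · intro j _ hjk
      have hj : v - tw j ∉ L := fun hj =>
        hgen k j hjk.symm (sub_sub_sub_cancel_left (tw j) (tw k) v ▸ L.sub_mem hj hvk)
      rw [off_L hj, mul_zero]
    · simp
  · obtain ⟨t, ht⟩ := exists_amb_chanOp_eq_sum r α tw CL v
    rw [ht]
    exact Finset.sum_eq_zero fun k _ => by rw [off_L (hv k), mul_zero]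

theorem peak_structure (N : ℕ) [NeZero N] (hN : N.Prime) (hodd : Odd N)
    (r : ℕ) (α : Fin r → ℂ) (tw : Fin r → ZMod N × ZMod N) (htw : Function.Injective tw)
    (L : Submodule (ZMod N) (ZMod N × ZMod N))
    (hL1 : Module.finrank (ZMod N) L = 1)
    (hgen : ∀ j k, j ≠ k → tw j - tw k ∉ L)
    (CL : ZMod N → ℂ) (hnorm : inn N CL CL = 1)
    (ψL : L → ℂ) (hunit : ∀ l : L, ‖ψL l‖ = 1)
    (hCL : ∀ l : L, heis N (l : ZMod N × ZMod N).1 (l : ZMod N × ZMod N).2 CL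
        = fun n => ψL l * CL n) :
    (∀ (k : Fin r) (v : ZMod N × ZMod N), v - tw k ∈ L →
        ‖amb N CL (chanOp N r α tw CL) v‖ = ‖α k‖) ∧
    (∀ v : ZMod N × ZMod N, (∀ k : Fin r, v - tw k ∉ L) →
        amb N CL (chanOp N r α tw CL) v = 0) :=
  peak_structure_general N hN r α tw L hL1 hgen CL hnorm ψL hunit hCL
end
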